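/- arXiv:0906.4008 — 8 statements merged into one kernel-verified Lean document; each statement's English description precedes it below -/
import Mathlib

section
/- Let p be a prime, F_q a finite field of characteristic p, γ ∈ F_q nonzero, and N a nonnegative integer with p-adic expansion N = b_{e-1}p^{e-1} + ... + b_1 p + b_0 (with 0 ≤ b_d ≤ p-1). Then the number of nonzero coefficients of the polynomial (x + γ)^N in F_q[x] equals the product (b_0 + 1)(b_1 + 1)···(b_{e-1} + 1). -/
open Polynomial Finset

private lemma coeff_key {F : Type*} [Field F] (q : ℕ) (hq : 0 < q) (c : F) (b : ℕ)
    (f : F[X]) (hf : f.natDegree < q) (n : ℕ) :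
    ((X ^ q + C c) ^ b * f).coeff n
      = if n / q ≤ b then ((b.choose (n / q) : F) * c ^ (b - n / q)) * f.coeff (n % q)
        else 0 := by
  rw [add_pow, Finset.sum_mul]
  have hterm : ∀ j ∈ Finset.range (b + 1),
      ((X ^ q : F[X]) ^ j * C c ^ (b - j) * (b.choose j : F[X])) * f
        = C ((b.choose j : F) * c ^ (b - j)) * f * X ^ (q * j) := by
    intro j _
    rw [← pow_mul]
    simp only [C_mul, C_pow, map_natCast]
    ring
  rw [Finset.sum_congr rfl hterm, finset_sum_coeff]
  simp only [coeff_mul_X_pow', coeff_C_mul]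
  have hdm := Nat.div_add_mod n q
  have hz : ∀ j, j ≠ n / q → j ≤ b →
      (if q * j ≤ n then (↑(b.choose j) * c ^ (b - j)) * f.coeff (n - q * j) else 0) = 0 := by
    intro j hj _
    split_ifs with h
    · have hle : j ≤ n / q := (Nat.le_div_iff_mul_le hq).mpr (by rw [mul_comm]; exact h)
      have hjlt : j < n / q := lt_of_le_of_ne hle hj
      have h1 : (j + 1) * q ≤ n / q * q := Nat.mul_le_mul_right _ (by omega)
      have h2 : n / q * q ≤ n := Nat.div_mul_le_self n q
      have h4 : q + q * j ≤ n := by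
        calc q + q * j = (j + 1) * q := by ring
          _ ≤ n / q * q := h1
          _ ≤ n := h2
      have h5 : q ≤ n - q * j := Nat.le_sub_of_add_le h4
      have : f.coeff (n - q * j) = 0 :=
        coeff_eq_zero_of_natDegree_lt (lt_of_lt_of_le hf h5)
      rw [this, mul_zero]
    · rfl
  by_cases hn : n / q ≤ b
  · rw [Finset.sum_eq_single (n / q)]
    · have h0 : q * (n / q) ≤ n := by omega
      rw [if_pos h0]
      have hmod : n - q * (n / q) = n % q :=
        Nat.sub_eq_of_eq_add (by rw [add_comm]; exact (Nat.div_add_mod n q).symm)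
      rw [hmod, if_pos hn]
    · intro j hj hne
      exact hz j hne (Nat.lt_succ_iff.mp (Finset.mem_range.mp hj))
    · intro h
      exact absurd (Finset.mem_range.mpr (Nat.lt_succ_iff.mpr hn)) h
  · rw [if_neg hn]
    refine Finset.sum_eq_zero fun j hj => ?_
    have hjb : j ≤ b := Nat.lt_succ_iff.mp (Finset.mem_range.mp hj)
    exact hz j (by omega) hjb

private lemma support_card_key {F : Type*} [Field F] {q : ℕ} (hq : 0 < q) {c : F} (hc : c ≠ 0)
    {b : ℕ} (hb : ∀ j ≤ b, ((b.choose j : ℕ) : F) ≠ 0) {f : F[X]} (hf : f.natDegree < q) :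
    ((X ^ q + C c) ^ b * f).support.card = (b + 1) * f.support.card := by
  have hsupp : ((X ^ q + C c) ^ b * f).support
      = ((Finset.range (b + 1)) ×ˢ f.support).image (fun x => q * x.1 + x.2) := by
    ext n
    simp only [mem_support_iff, coeff_key q hq c b f hf, Finset.mem_image,
      Finset.mem_product, Finset.mem_range]
    constructor
    · intro h
      split_ifs at h with hn
      · refine ⟨(n / q, n % q), ⟨Nat.lt_succ_iff.mpr hn, fun h0 => h (by rw [h0, mul_zero])⟩, ?_⟩
        exact Nat.div_add_mod n q
      · exact absurd rfl h
    · rintro ⟨⟨j, r⟩, ⟨hj, hr⟩, rfl⟩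
      simp only at hr ⊢
      have hrq : r < q := lt_of_le_of_lt (le_natDegree_of_ne_zero hr) hf
      have hdiv : (q * j + r) / q = j := by
        rw [Nat.mul_add_div hq, Nat.div_eq_of_lt hrq, add_zero]
      have hmod : (q * j + r) % q = r := by
        have h1 := Nat.div_add_mod (q * j + r) q
        rw [hdiv] at h1
        omega
      rw [hdiv, hmod, if_pos (Nat.lt_succ_iff.mp hj)]
      exact mul_ne_zero (mul_ne_zero (hb j (Nat.lt_succ_iff.mp hj)) (pow_ne_zero _ hc)) hr
  rw [hsupp, Finset.card_image_of_injOn, Finset.card_product, Finset.card_range]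
  rintro ⟨j, r⟩ hx ⟨j', r'⟩ hx' heq
  simp only [Finset.mem_coe, Finset.mem_product, Finset.mem_range, mem_support_iff] at hx hx'
  have hrq : r < q := lt_of_le_of_lt (le_natDegree_of_ne_zero hx.2) hf
  have hrq' : r' < q := lt_of_le_of_lt (le_natDegree_of_ne_zero hx'.2) hf
  simp only at heq
  have hj : j = j' := by
    have h1 : (q * j + r) / q = j := by
      rw [Nat.mul_add_div hq, Nat.div_eq_of_lt hrq, add_zero]
    have h2 : (q * j' + r') / q = j' := by
      rw [Nat.mul_add_div hq, Nat.div_eq_of_lt hrq', add_zero]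
    rw [← h1, ← h2, heq]
  subst hj
  have hr : r = r' := by
    have h1 := heq
    omega
  simp [hr]

private lemma geom_digit_sum (p e : ℕ) (hp : 1 ≤ p) :
    ∑ d ∈ Finset.range e, (p - 1) * p ^ d = p ^ e - 1 := by
  induction e with
  | zero => simp
  | succ e ih =>
    rw [Finset.sum_range_succ, ih, pow_succ]
    have h1 : 1 ≤ p ^ e := Nat.one_le_pow e p (by omega)
    have h2 : (p - 1) * p ^ e = p * p ^ e - p ^ e := by
      rw [Nat.sub_mul, one_mul]
    have h3 : p ^ e ≤ p * p ^ e := Nat.le_mul_of_pos_left _ (by omega)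
    rw [mul_comm (p ^ e) p]
    omega

theorem stmt_6 (p : ℕ) (hp : p.Prime) (F : Type*) [Field F] [Fintype F] [CharP F p]
    (γ : F) (hγ : γ ≠ 0) (e : ℕ) (b : ℕ → ℕ) (hb : ∀ d < e, b d ≤ p - 1)
    (N : ℕ) (hN : N = ∑ d ∈ Finset.range e, b d * p ^ d) :
    ((X + C γ) ^ N : F[X]).support.card = ∏ d ∈ Finset.range e, (b d + 1) := by
  haveI := Fact.mk hp
  subst hN
  induction e with
  | zero =>
    rw [Finset.range_zero, Finset.sum_empty, Finset.prod_empty, pow_zero,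
      show (1 : F[X]) = C 1 from Polynomial.C_1.symm, Polynomial.support_C one_ne_zero,
      Finset.card_singleton]
  | succ e ih =>
    have hb' : ∀ d < e, b d ≤ p - 1 := fun d hd => hb d (by omega)
    rw [Finset.sum_range_succ, Finset.prod_range_succ, pow_add,
      mul_comm (b e) (p ^ e), pow_mul, add_pow_char_pow, ← C_pow, mul_comm]
    set M := ∑ d ∈ Finset.range e, b d * p ^ d with hM
    have hdeg : ((X + C γ) ^ M : F[X]).natDegree = M := by
      rw [natDegree_pow, natDegree_X_add_C, mul_one]
    have hMlt : M < p ^ e := by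
      have h1 : M ≤ ∑ d ∈ Finset.range e, (p - 1) * p ^ d :=
        Finset.sum_le_sum fun d hd =>
          Nat.mul_le_mul_right _ (hb' d (Finset.mem_range.mp hd))
      rw [geom_digit_sum p e hp.one_lt.le] at h1
      have := Nat.one_le_pow e p hp.pos
      omega
    have hchoose : ∀ j ≤ b e, (((b e).choose j : ℕ) : F) ≠ 0 := by
      intro j hj
      rw [Ne, CharP.cast_eq_zero_iff F p]
      intro hdvd
      have h1 : (b e).choose j ∣ Nat.factorial (b e) := by
        rw [← Nat.choose_mul_factorial_mul_factorial hj]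
        exact dvd_mul_of_dvd_left (dvd_mul_right _ _) _
      have h3 : p ≤ b e := (Nat.Prime.dvd_factorial hp).mp (hdvd.trans h1)
      have h4 : b e ≤ p - 1 := hb e (Nat.lt_succ_self e)
      have h5 : 2 ≤ p := hp.two_le
      omega
    rw [support_card_key (pow_pos hp.pos e) (pow_ne_zero _ hγ) hchoose
      (by rw [hdeg]; exact hMlt)]
    rw [ih hb', mul_comm]
end

section
/- Let p be a prime, F_q a finite field of characteristic p, γ ∈ F_q nonzero, n ≥ 1 an integer, and N a nonnegative integer with p-adic expansion N = b_{e-1}p^{e-1} + ... + b_0. Then the Hamming weight of (x^n + γ)^N in F_q[x] equals the product over d of (b_d + 1). -/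
open Polynomial Finset

/-!
Substituting `X ^ n` for `X` does not change the number of nonzero coefficients, so the weight of
`(X ^ n + γ) ^ N` is that of `(X + γ) ^ N`, namely the number of `k ≤ N` with `p ∤ N.choose k`.
Lucas' theorem `N.choose k ≡ (N % p).choose (k % p) * (N / p).choose (k / p) [MOD p]` makes
`k ↦ (k % p, k / p)` a bijection from these `k` onto `[0, N % p] × (those for N / p)`, so the count
is multiplicative along the base-`p` digits of `N`.
-/

namespace Nat

theorem Prime.dvd_choose_iff_lt {p a b : ℕ} (hp : p.Prime) (ha : a < p) :
    p ∣ a.choose b ↔ a < b := by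
  refine ⟨fun h => ?_, fun h => by rw [choose_eq_zero_of_lt h]; exact dvd_zero p⟩
  by_contra hba
  exact hp.coprime_iff_not_dvd.mp (hp.coprime_choose_of_lt ha (not_lt.mp hba)) h

theorem Prime.dvd_choose_iff_mod_or_div {p N k : ℕ} (hp : p.Prime) :
    p ∣ N.choose k ↔ N % p < k % p ∨ p ∣ (N / p).choose (k / p) := by
  have : Fact p.Prime := ⟨hp⟩
  rw [Choose.choose_modEq_choose_mod_mul_choose_div_nat.dvd_iff dvd_rfl, hp.dvd_mul,
    hp.dvd_choose_iff_lt (mod_lt _ hp.pos)]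

def indicesChooseNotDvd (p N : ℕ) : Finset ℕ := {k ∈ range (N + 1) | ¬ p ∣ N.choose k}

theorem mem_indicesChooseNotDvd {p N k : ℕ} :
    k ∈ indicesChooseNotDvd p N ↔ ¬ p ∣ N.choose k := by
  refine ⟨fun h => (mem_filter.mp h).2, fun h => mem_filter.mpr ⟨?_, h⟩⟩
  by_contra hk
  exact h (by rw [choose_eq_zero_of_lt (by simpa using hk)]; exact dvd_zero p)

theorem card_indicesChooseNotDvd_eq_mul {p : ℕ} (hp : p.Prime) (N : ℕ) :
    #(indicesChooseNotDvd p N) = (N % p + 1) * #(indicesChooseNotDvd p (N / p)) := by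
  rw [← card_range (N % p + 1), ← card_product]
  refine card_nbij' (fun k => (k % p, k / p)) (fun x => x.1 + p * x.2) ?_ ?_ ?_ ?_
  · intro k hk
    rw [mem_coe, mem_indicesChooseNotDvd, hp.dvd_choose_iff_mod_or_div, not_or, not_lt] at hk
    rw [mem_coe, mem_product, mem_range_succ_iff, mem_indicesChooseNotDvd]
    exact hk
  · rintro ⟨a, j⟩ h
    rw [mem_coe, mem_product, mem_range_succ_iff, mem_indicesChooseNotDvd] at h
    have ha : a < p := h.1.trans_lt (mod_lt _ hp.pos)
    rw [mem_coe, mem_indicesChooseNotDvd, hp.dvd_choose_iff_mod_or_div, add_mul_mod_self_left,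
      add_mul_div_left _ _ hp.pos, mod_eq_of_lt ha, div_eq_of_lt ha, zero_add, not_or, not_lt]
    exact h
  · intro k _
    exact mod_add_div k p
  · rintro ⟨a, j⟩ h
    have ha : a < p := (mem_range_succ_iff.mp (mem_product.mp h).1).trans_lt (mod_lt _ hp.pos)
    simp only [add_mul_mod_self_left, add_mul_div_left _ _ hp.pos, mod_eq_of_lt ha,
      div_eq_of_lt ha, zero_add]

theorem card_indicesChooseNotDvd_sum {p : ℕ} (hp : p.Prime) (e : ℕ) (b : ℕ → ℕ)
    (hb : ∀ d < e, b d < p) :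
    #(indicesChooseNotDvd p (∑ d ∈ range e, b d * p ^ d)) = ∏ d ∈ range e, (b d + 1) := by
  induction e generalizing b with
  | zero => simp [indicesChooseNotDvd, filter_singleton, hp.ne_one]
  | succ e ih =>
    have hsum : ∑ d ∈ range (e + 1), b d * p ^ d =
        b 0 + p * ∑ d ∈ range e, b (d + 1) * p ^ d := by
      rw [sum_range_succ', mul_sum, pow_zero, mul_one, add_comm]
      congr 1
      exact sum_congr rfl fun d _ => by ring
    have hb0 : b 0 < p := hb 0 e.succ_pos
    rw [hsum, card_indicesChooseNotDvd_eq_mul hp, add_mul_mod_self_left,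
      add_mul_div_left _ _ hp.pos, mod_eq_of_lt hb0, div_eq_of_lt hb0, zero_add,
      ih _ fun d hd => hb _ (succ_lt_succ hd),
      prod_range_succ', mul_comm]

end Nat

namespace Polynomial

variable {R : Type*}

theorem support_expand [CommSemiring R] {n : ℕ} (hn : 0 < n) (f : R[X]) :
    (expand R n f).support = f.support.map ⟨(· * n), mul_left_injective₀ hn.ne'⟩ := by
  ext m
  simp only [mem_support_iff, coeff_expand hn, mem_map, Function.Embedding.coeFn_mk]
  constructor
  · intro h
    split_ifs at h with hdvd
    · exact ⟨m / n, h, Nat.div_mul_cancel hdvd⟩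
    · exact absurd rfl h
  · rintro ⟨k, hk, rfl⟩
    rwa [if_pos (dvd_mul_left _ _), Nat.mul_div_cancel _ hn]

theorem card_support_expand [CommSemiring R] {n : ℕ} (hn : 0 < n) (f : R[X]) :
    #(expand R n f).support = #f.support := by
  rw [support_expand hn, card_map]

theorem support_X_add_C_pow [Semiring R] [NoZeroDivisors R] (p : ℕ) [CharP R p] {γ : R}
    (hγ : γ ≠ 0) (N : ℕ) : ((X + C γ) ^ N).support = Nat.indicesChooseNotDvd p N := by
  ext k
  rw [mem_support_iff, coeff_X_add_C_pow, Nat.mem_indicesChooseNotDvd, ne_eq, mul_eq_zero,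
    not_or, CharP.cast_eq_zero_iff R p]
  exact and_iff_right (pow_ne_zero _ hγ)

theorem card_support_X_pow_add_C_pow [CommSemiring R] [NoZeroDivisors R] (p : ℕ) [CharP R p]
    {γ : R} (hγ : γ ≠ 0) {n : ℕ} (hn : 0 < n) (N : ℕ) :
    #((X ^ n + C γ) ^ N).support = #(Nat.indicesChooseNotDvd p N) := by
  have hexpand : (X ^ n + C γ) ^ N = expand R n ((X + C γ) ^ N) := by
    rw [map_pow, map_add, expand_X, expand_C]
  rw [hexpand, card_support_expand hn, support_X_add_C_pow p hγ]

end Polynomial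

theorem stmt_7_general (p : ℕ) (hp : p.Prime) (F : Type*) [Field F] [CharP F p]
    (γ : F) (hγ : γ ≠ 0) (n : ℕ) (hn : 1 ≤ n)
    (e : ℕ) (b : ℕ → ℕ) (hb : ∀ d < e, b d ≤ p - 1)
    (N : ℕ) (hN : N = ∑ d ∈ Finset.range e, b d * p ^ d) :
    ((X ^ n + C γ) ^ N : F[X]).support.card = ∏ d ∈ Finset.range e, (b d + 1) := by
  rw [card_support_X_pow_add_C_pow p hγ hn, hN]
  exact Nat.card_indicesChooseNotDvd_sum hp e b fun d hd =>
    (Nat.le_sub_one_iff_lt hp.pos).mp (hb d hd)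

theorem stmt_7 (p : ℕ) (hp : p.Prime) (F : Type*) [Field F] [Fintype F] [CharP F p]
    (γ : F) (hγ : γ ≠ 0) (n : ℕ) (hn : 1 ≤ n)
    (e : ℕ) (b : ℕ → ℕ) (hb : ∀ d < e, b d ≤ p - 1)
    (N : ℕ) (hN : N = ∑ d ∈ Finset.range e, b d * p ^ d) :
    ((X ^ n + C γ) ^ N : F[X]).support.card = ∏ d ∈ Finset.range e, (b d + 1) :=
  stmt_7_general p hp F γ hγ n hn e b hb N hN
end

section
/- Let p be a prime, s ≥ 1, F_q a finite field of characteristic p, γ ∈ F_q nonzero, and n ≥ 1. Let m and β be integers with 1 ≤ β ≤ p-2 and 0 ≤ m < p^s - βp^{s-1} - 1. Then the Hamming weight of (x^n + γ)^{m + βp^{s-1} + 1} in F_q[x] is at least β + 2. -/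
/-!
Over a field of characteristic `p`, `(x^n + γ)^N` is `(x + γ)^N` with `x` replaced by `x^n`, so
it has the same weight. Write `P = p^(s-1)`, so that `βP < N < pP`. By Lucas's theorem the
coefficient `γ^(N - jP) · C(N, jP)` of `x^(jP)` in `(x + γ)^N` is `C(⌊N/P⌋, j)` modulo `p`, which
is nonzero because `⌊N/P⌋ < p`. The `β + 1` monomials `x^(jP)`, `j ≤ β`, together with the leading
monomial `x^N` give the `β + 2` nonzero coefficients.
-/

open Polynomial

namespace Choose

theorem choose_mul_pow_modEq_choose_div_pow (p : ℕ) [Fact p.Prime] (n j t : ℕ) :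
    n.choose (j * p ^ t) ≡ (n / p ^ t).choose j [MOD p] := by
  induction t generalizing n with
  | zero => simp [Nat.ModEq.refl]
  | succ t ih =>
    have hp : 0 < p := (Fact.out : p.Prime).pos
    have hk : j * p ^ (t + 1) = p * (j * p ^ t) := by ring
    refine choose_modEq_choose_mod_mul_choose_div_nat.trans ?_
    rw [hk, Nat.mul_mod_right, Nat.mul_div_cancel_left _ hp, Nat.choose_zero_right, one_mul,
      pow_succ', ← Nat.div_div_eq_div_mul]
    exact ih (n / p)

end Choose

theorem Nat.cast_choose_mul_pow_ne_zero {R : Type*} [AddMonoidWithOne R] (p : ℕ) [Fact p.Prime]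
    [CharP R p] {n j t : ℕ} (hn : n < p ^ (t + 1)) (hj : j * p ^ t ≤ n) :
    (n.choose (j * p ^ t) : R) ≠ 0 := by
  have hp : p.Prime := Fact.out
  have hpt : 0 < p ^ t := pow_pos hp.pos t
  have hdiv : n / p ^ t < p := by rwa [Nat.div_lt_iff_lt_mul hpt, ← pow_succ']
  have hjd : j ≤ n / p ^ t := (Nat.le_div_iff_mul_le hpt).mpr hj
  rw [Ne, CharP.cast_eq_zero_iff R p,
    (Choose.choose_mul_pow_modEq_choose_div_pow p n j t).dvd_iff dvd_rfl]
  exact (Nat.Prime.coprime_iff_not_dvd hp).mp (hp.coprime_choose_of_lt hdiv hjd)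

theorem Polynomial.card_support_expand_s8 {R : Type*} [CommSemiring R] {n : ℕ} (hn : 0 < n)
    (f : R[X]) : (expand R n f).support.card = f.support.card := by
  have hsupp : (expand R n f).support = f.support.map ⟨(n * ·), mul_right_injective₀ hn.ne'⟩ := by
    ext k
    simp only [mem_support_iff, coeff_expand hn, Finset.mem_map, Function.Embedding.coeFn_mk]
    constructor
    · intro hk
      have hdvd : n ∣ k := by_contra fun h => hk (if_neg h)
      exact ⟨k / n, by rwa [if_pos hdvd] at hk, Nat.mul_div_cancel' hdvd⟩
    · rintro ⟨i, hi, rfl⟩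
      rwa [if_pos (dvd_mul_right n i), Nat.mul_div_cancel_left _ hn]
  rw [hsupp, Finset.card_map]

theorem Polynomial.add_two_le_card_support_X_add_C_pow {R : Type*} [CommRing R] [IsDomain R]
    (p : ℕ) [Fact p.Prime] [CharP R p] {γ : R} (hγ : γ ≠ 0) {N t b : ℕ}
    (hN : N < p ^ (t + 1)) (hb : b * p ^ t < N) :
    b + 2 ≤ ((X + C γ) ^ N).support.card := by
  have hpt : 0 < p ^ t := pow_pos (Fact.out : p.Prime).pos t
  have hmul_lt : ∀ j ∈ Finset.range (b + 1), j * p ^ t < N := fun j hj =>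
    lt_of_le_of_lt (Nat.mul_le_mul_right _ (Nat.lt_succ_iff.mp (Finset.mem_range.mp hj))) hb
  let S := insert N ((Finset.range (b + 1)).map ⟨(· * p ^ t), mul_left_injective₀ hpt.ne'⟩)
  have hS : S.card = b + 2 := by
    rw [Finset.card_insert_of_notMem, Finset.card_map, Finset.card_range]
    simp only [Finset.mem_map, Function.Embedding.coeFn_mk, not_exists, not_and]
    exact fun j hj hjN => (hmul_lt j hj).ne hjN
  have hSsupp : S ⊆ ((X + C γ) ^ N).support := by
    simp only [S, Finset.insert_subset_iff, Finset.map_subset_iff_subset_preimage,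
      mem_support_iff, coeff_X_add_C_pow]
    refine ⟨by simp, fun j hj => ?_⟩
    simp only [Finset.mem_preimage, mem_support_iff, coeff_X_add_C_pow,
      Function.Embedding.coeFn_mk]
    exact mul_ne_zero (pow_ne_zero _ hγ)
      (Nat.cast_choose_mul_pow_ne_zero p hN (hmul_lt j hj).le)
  exact hS ▸ Finset.card_le_card hSsupp

theorem stmt_8_general (p s : ℕ) (hp : p.Prime)
    (F : Type*) [Field F] [CharP F p]
    (γ : F) (hγ : γ ≠ 0) (n : ℕ) (hn : 1 ≤ n)
    (m β : ℕ)
    (hm : m < p ^ s - β * p ^ (s - 1) - 1) :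
    β + 2 ≤ ((X ^ n + C γ) ^ (m + β * p ^ (s - 1) + 1) : F[X]).support.card := by
  have : Fact p.Prime := ⟨hp⟩
  have hexpand : ((X ^ n + C γ) ^ (m + β * p ^ (s - 1) + 1) : F[X])
      = expand F n ((X + C γ) ^ (m + β * p ^ (s - 1) + 1)) := by
    rw [map_pow, map_add, expand_X, expand_C]
  rw [hexpand, card_support_expand_s8 hn]
  refine add_two_le_card_support_X_add_C_pow p hγ (t := s - 1) ?_ (by omega)
  calc m + β * p ^ (s - 1) + 1 < p ^ s := by omega
    _ ≤ p ^ (s - 1 + 1) := Nat.pow_le_pow_right hp.pos (by omega)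

theorem stmt_8 (p s : ℕ) (hp : p.Prime) (hs : 1 ≤ s)
    (F : Type*) [Field F] [Fintype F] [CharP F p]
    (γ : F) (hγ : γ ≠ 0) (n : ℕ) (hn : 1 ≤ n)
    (m β : ℕ) (hβ1 : 1 ≤ β) (hβ2 : β ≤ p - 2)
    (hm : m < p ^ s - β * p ^ (s - 1) - 1) :
    β + 2 ≤ ((X ^ n + C γ) ^ (m + β * p ^ (s - 1) + 1) : F[X]).support.card :=
  stmt_8_general p s hp F γ hγ n hn m β hm
end

section
/- Let p be a prime, s ≥ 1, F_q a finite field of characteristic p, γ ∈ F_q nonzero, n ≥ 1. Let k, τ, m be integers with 1 ≤ k ≤ s-1, 1 ≤ τ ≤ p-1, and 0 ≤ m < p^{s-k} - (τ-1)p^{s-k-1} - 1. Then the Hamming weight of (x^n + γ)^{m + p^s - p^{s-k} + (τ-1)p^{s-k-1} + 1} in F_q[x] is at least (τ+1)p^k. -/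
/-!
In characteristic `p`, `(X + a) ^ (A * p ^ c + B) = (X ^ p ^ c + a ^ p ^ c) ^ A * (X + a) ^ B`, and
when `deg g < P` the support of `f(X ^ P) * g` is in bijection with `supp f × supp g`; so Hamming
weights multiply along blocks of base-`p` digits of the exponent (a polynomial form of Lucas'
theorem). With `s - k = t + 1` and `m + 1 = q * p ^ t + r`, `r < p ^ t`, the exponent is
`(p ^ k - 1) * p ^ (t + 1) + (τ - 1 + q) * p ^ t + r`, of weight
`p ^ k * (τ - 1 + q + 1) * w((X + γ) ^ r)`. This is at least `(τ + 1) * p ^ k`: either `q ≥ 1`, or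
`q = 0` and then `r = m + 1 ≥ 1`, so `(X + γ) ^ r` has at least two terms. Substituting `X ^ n`
for `X` does not change weights.
-/

open Polynomial

namespace Polynomial

section Expand
variable {R : Type*} [CommSemiring R] {P : ℕ} {f g : R[X]}

theorem coeff_expand_mul_of_natDegree_lt (hg : g.natDegree < P) (n : ℕ) :
    (expand R P f * g).coeff n = f.coeff (n / P) * g.coeff (n % P) := by
  have hP : 0 < P := g.natDegree.zero_le.trans_lt hg
  rw [coeff_mul, Finset.sum_eq_single (P * (n / P), n % P)]
  · rw [coeff_expand_mul' hP]
  · rintro ⟨a, b⟩ hab hne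
    rw [Finset.HasAntidiagonal.mem_antidiagonal] at hab
    rw [coeff_expand hP]
    split_ifs with hdvd
    · obtain ⟨c, rfl⟩ := hdvd
      refine mul_eq_zero_of_right _ (coeff_eq_zero_of_natDegree_lt ?_)
      by_contra! hb
      simp only at hab hb
      have hc : n / P = c := by
        rw [← hab, Nat.mul_add_div hP, Nat.div_eq_of_lt (by omega), add_zero]
      have hb' : n % P = b := by rw [← hab, Nat.mul_add_mod, Nat.mod_eq_of_lt (by omega)]
      exact hne (by rw [hc, hb'])
    · exact zero_mul _
  · simp [Nat.div_add_mod]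

theorem card_support_expand_mul_of_natDegree_lt [NoZeroDivisors R] (hg : g.natDegree < P) :
    (expand R P f * g).support.card = f.support.card * g.support.card := by
  have hP : 0 < P := g.natDegree.zero_le.trans_lt hg
  have digits : ∀ i j, g.coeff j ≠ 0 → (i * P + j) / P = i ∧ (i * P + j) % P = j := by
    intro i j hj
    have hjP : j < P := (le_natDegree_of_ne_zero hj).trans_lt hg
    rw [add_comm, Nat.add_mul_div_right _ _ hP, Nat.div_eq_of_lt hjP, Nat.add_mul_mod_self_right,
      Nat.mod_eq_of_lt hjP]
    exact ⟨zero_add i, rfl⟩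
  rw [← Finset.card_product]
  refine Finset.card_nbij' (fun n => (n / P, n % P)) (fun ij => ij.1 * P + ij.2) ?_ ?_ ?_ ?_
  · intro n hn
    simpa [coeff_expand_mul_of_natDegree_lt hg, not_or] using hn
  · rintro ⟨i, j⟩ hij
    simp only [Finset.coe_product, Set.mem_prod, Finset.mem_coe, mem_support_iff] at hij
    simp [coeff_expand_mul_of_natDegree_lt hg, digits i j hij.2, hij.1, hij.2]
  · intro n _
    simp [Nat.div_add_mod']
  · rintro ⟨i, j⟩ hij
    simp only [Finset.coe_product, Set.mem_prod, Finset.mem_coe, mem_support_iff] at hij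
    simp [digits i j hij.2]

theorem card_support_expand_s9 (hP : 0 < P) : (expand R P f).support.card = f.support.card := by
  refine Finset.card_nbij' (· / P) (· * P) ?_ ?_ ?_ ?_
  · intro n hn
    simp only [Finset.mem_coe, mem_support_iff, coeff_expand hP] at hn ⊢
    split_ifs at hn
    exacts [hn, absurd rfl hn]
  · intro i hi
    simpa [hP] using hi
  · intro n hn
    simp only [Finset.mem_coe, mem_support_iff, coeff_expand hP] at hn
    split_ifs at hn with h
    exacts [Nat.div_mul_cancel h, absurd rfl hn]
  · intro i _
    exact Nat.mul_div_cancel i hP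

end Expand

theorem X_add_C_pow_mul_add {R : Type*} [CommSemiring R] {p : ℕ} [ExpChar R p] (a : R)
    (A B c : ℕ) :
    (X + C a) ^ (A * p ^ c + B) = expand R (p ^ c) ((X + C (a ^ p ^ c)) ^ A) * (X + C a) ^ B := by
  rw [pow_add, mul_comm A, pow_mul, add_pow_expChar_pow, map_pow, map_add, expand_X, expand_C,
    C_pow]

section CharP
variable {R : Type*} [CommRing R] [IsDomain R] {p : ℕ}

theorem card_support_X_add_C_pow_mul_add [ExpChar R p] (a : R) (A : ℕ) {B c : ℕ}
    (hB : B < p ^ c) :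
    ((X + C a) ^ (A * p ^ c + B)).support.card =
      ((X + C (a ^ p ^ c)) ^ A).support.card * ((X + C a) ^ B).support.card := by
  rw [X_add_C_pow_mul_add, card_support_expand_mul_of_natDegree_lt]
  rwa [natDegree_pow_X_add_C]

variable [Fact p.Prime] [CharP R p] {a : R}

theorem card_support_X_add_C_pow_of_lt (ha : a ≠ 0) {N : ℕ} (hN : N < p) :
    ((X + C a) ^ N).support.card = N + 1 := by
  have hp : p.Prime := Fact.out
  suffices ((X + C a) ^ N).support = Finset.range (N + 1) by rw [this, Finset.card_range]
  ext j
  rw [mem_support_iff, coeff_X_add_C_pow, Finset.mem_range, Nat.lt_succ_iff]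
  refine ⟨fun hj => ?_, fun hj => mul_ne_zero (pow_ne_zero _ ha) ?_⟩
  · by_contra! hNj
    rw [Nat.choose_eq_zero_of_lt hNj, Nat.cast_zero, mul_zero] at hj
    exact hj rfl
  · rw [Ne, CharP.cast_eq_zero_iff R p]
    intro hdvd
    have : N.choose j ∣ N.factorial := by
      rw [← Nat.choose_mul_factorial_mul_factorial hj, mul_assoc]
      exact dvd_mul_right _ _
    exact absurd (hp.dvd_factorial.1 (hdvd.trans this)) (by omega)

theorem card_support_X_add_C_pow_prime_pow_sub_one (ha : a ≠ 0) (k : ℕ) :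
    ((X + C a) ^ (p ^ k - 1)).support.card = p ^ k := by
  have hp : p.Prime := Fact.out
  induction k with
  | zero =>
    rw [pow_zero, Nat.sub_self, pow_zero, ← C_1, support_C one_ne_zero, Finset.card_singleton]
  | succ k ih =>
    have hpk : 1 ≤ p ^ k := Nat.one_le_pow _ _ hp.pos
    have hle : p ^ k ≤ p * p ^ k := Nat.le_mul_of_pos_left _ hp.pos
    have hsplit : p ^ (k + 1) - 1 = (p - 1) * p ^ k + (p ^ k - 1) := by
      rw [Nat.sub_mul, one_mul, pow_succ']
      omega
    rw [hsplit, card_support_X_add_C_pow_mul_add a _ (Nat.sub_lt hpk one_pos), ih,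
      card_support_X_add_C_pow_of_lt (pow_ne_zero _ ha) (Nat.sub_lt hp.pos one_pos),
      Nat.sub_add_cancel hp.one_le, pow_succ']

theorem card_support_X_add_C_pow_digits (ha : a ≠ 0) (k : ℕ) {t d r : ℕ} (hd : d < p)
    (hr : r < p ^ t) :
    ((X + C a) ^ ((p ^ k - 1) * p ^ (t + 1) + (d * p ^ t + r))).support.card =
      p ^ k * ((d + 1) * ((X + C a) ^ r).support.card) := by
  have hlow : d * p ^ t + r < p ^ (t + 1) := calc
    d * p ^ t + r < (d + 1) * p ^ t := by rw [add_mul, one_mul]; omega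
    _ ≤ p ^ (t + 1) := by rw [pow_succ']; exact Nat.mul_le_mul_right _ hd
  rw [card_support_X_add_C_pow_mul_add a _ hlow,
    card_support_X_add_C_pow_prime_pow_sub_one (pow_ne_zero _ ha),
    card_support_X_add_C_pow_mul_add a _ hr, card_support_X_add_C_pow_of_lt (pow_ne_zero _ ha) hd]

end CharP

theorem two_le_card_support_X_add_C_pow {R : Type*} [CommSemiring R] [NoZeroDivisors R]
    [Nontrivial R] {a : R} (ha : a ≠ 0) {N : ℕ} (hN : 1 ≤ N) :
    2 ≤ ((X + C a) ^ N).support.card := by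
  have hsub : {0, N} ⊆ ((X + C a) ^ N).support := by
    intro j hj
    rw [Finset.mem_insert, Finset.mem_singleton] at hj
    rw [mem_support_iff, coeff_X_add_C_pow]
    rcases hj with rfl | rfl <;> simp [ha]
  calc 2 = ({0, N} : Finset ℕ).card := (Finset.card_pair (by omega)).symm
    _ ≤ _ := Finset.card_le_card hsub

end Polynomial

theorem exists_exponent_digits {p s k τ m : ℕ} (hp : 0 < p)
    (hm : m < p ^ (s - k) - (τ - 1) * p ^ (s - k - 1) - 1) :
    ∃ t q r, r < p ^ t ∧ q * p ^ t + r = m + 1 ∧ τ - 1 + q < p ∧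
      m + p ^ s - p ^ (s - k) + (τ - 1) * p ^ (s - k - 1) + 1 =
        (p ^ k - 1) * p ^ (t + 1) + ((τ - 1 + q) * p ^ t + r) := by
  obtain ⟨t, ht⟩ : ∃ t, s - k = t + 1 :=
    Nat.exists_eq_add_one.mpr (Nat.pos_of_ne_zero fun h => by simp [h] at hm)
  rw [show s - k - 1 = t by omega, ht] at hm ⊢
  obtain ⟨q, r, hqr, hr⟩ : ∃ q r, q * p ^ t + r = m + 1 ∧ r < p ^ t :=
    ⟨_, _, Nat.div_add_mod' (m + 1) (p ^ t), Nat.mod_lt _ (pow_pos hp t)⟩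
  have hd : (τ - 1 + q) * p ^ t = (τ - 1) * p ^ t + q * p ^ t := add_mul _ _ _
  have hs : p ^ s = p ^ k * p ^ (t + 1) := by rw [← pow_add]; congr 1; omega
  have hk : (p ^ k - 1) * p ^ (t + 1) = p ^ s - p ^ (t + 1) := by rw [Nat.sub_mul, one_mul, hs]
  have hts : p ^ (t + 1) ≤ p ^ s := hs ▸ Nat.le_mul_of_pos_left _ (pow_pos hp k)
  have hdp : (τ - 1 + q) * p ^ t < p * p ^ t := by rw [← pow_succ']; omega
  exact ⟨t, q, r, hr, hqr, Nat.lt_of_mul_lt_mul_right hdp, by omega⟩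

theorem stmt_9_general (p s : ℕ) (hp : p.Prime)
    (F : Type*) [Field F] [CharP F p]
    (γ : F) (hγ : γ ≠ 0) (n : ℕ) (hn : 1 ≤ n)
    (k τ m : ℕ)
    (hm : m < p ^ (s - k) - (τ - 1) * p ^ (s - k - 1) - 1) :
    (τ + 1) * p ^ k ≤
      ((X ^ n + C γ) ^ (m + p ^ s - p ^ (s - k) + (τ - 1) * p ^ (s - k - 1) + 1) :
        F[X]).support.card := by
  have : Fact p.Prime := ⟨hp⟩
  obtain ⟨t, q, r, hr, hqr, hdp, hexp⟩ := exists_exponent_digits hp.pos hm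
  have hsubst : ∀ N, (X ^ n + C γ) ^ N = expand F n ((X + C γ) ^ N) := fun N => by
    rw [map_pow, map_add, expand_X, expand_C]
  rw [hexp, hsubst, card_support_expand_s9 hn, card_support_X_add_C_pow_digits hγ k hdp hr, mul_comm]
  refine Nat.mul_le_mul_left _ ?_
  have hw : 0 < ((X + C γ) ^ r).support.card :=
    Finset.card_pos.2 (support_nonempty.2 (pow_ne_zero _ (X_add_C_ne_zero γ)))
  rcases Nat.eq_zero_or_pos q with hq | hq
  · have hw2 := two_le_card_support_X_add_C_pow hγ (N := r)
      (by rw [hq, zero_mul, zero_add] at hqr; omega)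
    calc τ + 1 ≤ (τ - 1 + q + 1) * 2 := by omega
      _ ≤ _ := Nat.mul_le_mul_left _ hw2
  · calc τ + 1 ≤ τ - 1 + q + 1 := by omega
      _ ≤ _ := Nat.le_mul_of_pos_right _ hw

theorem stmt_9 (p s : ℕ) (hp : p.Prime) (hs : 1 ≤ s)
    (F : Type*) [Field F] [Fintype F] [CharP F p]
    (γ : F) (hγ : γ ≠ 0) (n : ℕ) (hn : 1 ≤ n)
    (k τ m : ℕ) (hk1 : 1 ≤ k) (hk2 : k ≤ s - 1) (hτ1 : 1 ≤ τ) (hτ2 : τ ≤ p - 1)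
    (hm : m < p ^ (s - k) - (τ - 1) * p ^ (s - k - 1) - 1) :
    (τ + 1) * p ^ k ≤
      ((X ^ n + C γ) ^ (m + p ^ s - p ^ (s - k) + (τ - 1) * p ^ (s - k - 1) + 1) :
        F[X]).support.card :=
  stmt_9_general p s hp F γ hγ n hn k τ m hm
end

section
/- Let p be a prime, F_q a finite field of characteristic p, n, s ≥ 1 integers, γ_1, γ_2 ∈ F_q nonzero, and 0 < i < p^s an integer. Then the Hamming weight of (x^n + γ_1)^{p^s} (x^n + γ_2)^i in F_q[x] equals twice the Hamming weight of (x^n + γ_2)^i. -/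
open Polynomial

lemma support_C_mul_eq {F : Type*} [Field F] (c : F) (hc : c ≠ 0) (g : F[X]) :
    (C c * g).support = g.support := by
  ext m
  simp [mem_support_iff, coeff_C_mul, hc]

lemma support_X_pow_mul_eq {F : Type*} [Field F] (k : ℕ) (g : F[X]) :
    (X ^ k * g).support = g.support.map (addLeftEmbedding k) := by
  ext m
  simp only [mem_support_iff, Finset.mem_map, addLeftEmbedding_apply]
  constructor
  · intro h
    by_cases hm : k ≤ m
    · refine ⟨m - k, ?_, by omega⟩
      rwa [coeff_X_pow_mul' g k m, if_pos hm] at h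
    · exfalso; rw [coeff_X_pow_mul' g k m, if_neg hm] at h; exact h rfl
  · rintro ⟨d, hd, rfl⟩
    rw [add_comm]; rwa [coeff_X_pow_mul]

lemma support_add_of_disjoint {F : Type*} [Field F] (a b : F[X])
    (h : Disjoint a.support b.support) : (a + b).support = a.support ∪ b.support := by
  ext m
  simp only [mem_support_iff, coeff_add, Finset.mem_union]
  by_cases ha : a.coeff m = 0 <;> by_cases hb : b.coeff m = 0 <;> simp [ha, hb]
  exact (Finset.disjoint_left.mp h (mem_support_iff.mpr ha) (mem_support_iff.mpr hb)).elim

theorem stmt_10 (p : ℕ) (hp : p.Prime) (F : Type*) [Field F] [Fintype F] [CharP F p]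
    (n s : ℕ) (hn : 1 ≤ n) (hs : 1 ≤ s)
    (γ₁ γ₂ : F) (hγ₁ : γ₁ ≠ 0) (hγ₂ : γ₂ ≠ 0)
    (i : ℕ) (hi1 : 0 < i) (hi2 : i < p ^ s) :
    (((X ^ n + C γ₁) ^ (p ^ s) * (X ^ n + C γ₂) ^ i : F[X])).support.card =
      2 * ((X ^ n + C γ₂) ^ i : F[X]).support.card := by
  haveI := Fact.mk hp
  set g : F[X] := (X ^ n + C γ₂) ^ i with hg
  have h1 : ((X ^ n + C γ₁) ^ (p ^ s) : F[X]) = X ^ (n * p ^ s) + C (γ₁ ^ (p ^ s)) := by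
    rw [add_pow_char_pow, ← pow_mul, ← C_pow]
  have hdeg : g.natDegree < n * p ^ s := by
    have h2 : g.natDegree ≤ i * n := by
      calc g.natDegree ≤ i * (X ^ n + C γ₂ : F[X]).natDegree := natDegree_pow_le
        _ ≤ i * n := by
            gcongr
            exact (natDegree_add_le _ _).trans (by simp)
    have h3 : i * n < n * p ^ s := by nlinarith
    omega
  have hc : (γ₁ : F) ^ (p ^ s) ≠ 0 := pow_ne_zero _ hγ₁
  rw [h1, add_mul]
  have hdisj : Disjoint ((X ^ (n * p ^ s) * g : F[X])).support ((C (γ₁ ^ (p ^ s)) * g : F[X])).support := by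
    rw [support_X_pow_mul_eq, support_C_mul_eq _ hc]
    rw [Finset.disjoint_left]
    rintro m hm hm'
    simp only [Finset.mem_map, addLeftEmbedding_apply] at hm
    obtain ⟨d, hd, rfl⟩ := hm
    have := le_natDegree_of_mem_supp _ hm'
    omega
  rw [support_add_of_disjoint _ _ hdisj, Finset.card_union_of_disjoint hdisj,
    support_X_pow_mul_eq, support_C_mul_eq _ hc, Finset.card_map]
  ring
end

section
/- Let p be a prime, s, n positive integers, F_q a finite field of characteristic p, and γ ∈ F_q nonzero such that x^n + γ is irreducible over F_q. Let λ = -γ^{p^s}. Then x^{np^s} - λ = (x^n + γ)^{p^s} in F_q[x], and the monic divisors of x^{np^s} - λ are exactly the polynomials (x^n + γ)^i for 0 ≤ i ≤ p^s. -/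
open Polynomial

theorem stmt_14 (p s n : ℕ) (hp : p.Prime) (hs : 1 ≤ s) (hn : 1 ≤ n)
    (F : Type*) [Field F] [Fintype F] [CharP F p]
    (γ : F) (hγ : γ ≠ 0) (hirr : Irreducible ((X : F[X]) ^ n + C γ))
    (lam : F) (hlam : lam = -γ ^ p ^ s) :
    (X : F[X]) ^ (n * p ^ s) - C lam = ((X : F[X]) ^ n + C γ) ^ p ^ s ∧
      ∀ g : F[X], (g.Monic ∧ g ∣ (X : F[X]) ^ (n * p ^ s) - C lam) ↔
        ∃ i ≤ p ^ s, g = ((X : F[X]) ^ n + C γ) ^ i := by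
  haveI : Fact p.Prime := ⟨hp⟩
  have hq : ((X : F[X]) ^ n + C γ) ^ p ^ s = X ^ (n * p ^ s) - C lam := by
    rw [add_pow_char_pow, hlam, ← pow_mul, map_neg, map_pow, sub_neg_eq_add, mul_comm]
  have hmon : ((X : F[X]) ^ n + C γ).Monic := by
    apply monic_X_pow_add
    refine lt_of_le_of_lt degree_C_le ?_
    exact_mod_cast Nat.pos_of_ne_zero (Nat.one_le_iff_ne_zero.mp hn)
  have hprime : Prime ((X : F[X]) ^ n + C γ) := hirr.prime
  refine ⟨hq.symm, fun g => ⟨?_, ?_⟩⟩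
  · rintro ⟨hg, hdvd⟩
    rw [← hq] at hdvd
    obtain ⟨i, hi, hassoc⟩ := (dvd_prime_pow hprime _).mp hdvd
    exact ⟨i, hi, Polynomial.eq_of_monic_of_associated hg (hmon.pow i) hassoc⟩
  · rintro ⟨i, hi, rfl⟩
    exact ⟨hmon.pow i, by rw [← hq]; exact pow_dvd_pow _ hi⟩
end

section
/- Let p be a prime, s ≥ 1, n ≥ 1, F_q a finite field of characteristic p, γ ∈ F_q nonzero with x^n + γ irreducible over F_q, and let 1 ≤ i ≤ p^{s-1}. In R = F_q[x]/⟨(x^n + γ)^{p^s}⟩, the ideal C = ⟨(x^n + γ)^i⟩ contains an element whose unique representative of degree < np^s has exactly 2 nonzero coefficients, namely x^{np^{s-1}} + γ^{p^{s-1}}; consequently the minimum Hamming distance of C equals 2. -/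
open Polynomial

lemma aux_not_dvd {F : Type*} [Field F] {n : ℕ} (hn : 1 ≤ n) {γ : F} (hγ : γ ≠ 0)
    (hirr : Irreducible ((X : F[X]) ^ n + C γ)) {c : F} (hc : c ≠ 0) {k : ℕ}
    (hdvd : ((X : F[X]) ^ n + C γ) ∣ C c * X ^ k) : False := by
  have hpr : Prime ((X : F[X]) ^ n + C γ) := hirr.prime
  have hdeg : ((X : F[X]) ^ n + C γ).natDegree = n := natDegree_X_pow_add_C
  rcases hpr.2.2 _ _ hdvd with h | h
  · have := natDegree_le_of_dvd h (C_ne_zero.mpr hc)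
    simp [hdeg, natDegree_C] at this
    omega
  · have hX : ((X : F[X]) ^ n + C γ) ∣ X := hpr.dvd_of_dvd_pow h
    obtain ⟨r, hr⟩ := hX
    have hr0 : r ≠ 0 := by
      rintro rfl
      rw [mul_zero] at hr
      exact X_ne_zero hr
    have hq0 : ((X : F[X]) ^ n + C γ) ≠ 0 := hirr.ne_zero
    have h1 : (1 : ℕ) = n + r.natDegree := by
      have := congrArg natDegree hr
      rwa [natDegree_X, natDegree_mul hq0 hr0, hdeg] at this
    have hn1 : n = 1 := by omega
    subst hn1
    have := congrArg (Polynomial.eval (-γ)) hr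
    simp at this
    exact hγ this

theorem stmt_15 (p s n : ℕ) (hp : p.Prime) (hs : 1 ≤ s) (hn : 1 ≤ n)
    (F : Type*) [Field F] [Fintype F] [CharP F p]
    (γ : F) (hγ : γ ≠ 0) (hirr : Irreducible ((X : F[X]) ^ n + C γ))
    (i : ℕ) (hi1 : 1 ≤ i) (hi2 : i ≤ p ^ (s - 1)) :
    Ideal.Quotient.mk (Ideal.span {((X : F[X]) ^ n + C γ) ^ p ^ s})
        ((X : F[X]) ^ (n * p ^ (s - 1)) + C (γ ^ p ^ (s - 1))) ∈
      Ideal.span {Ideal.Quotient.mk (Ideal.span {((X : F[X]) ^ n + C γ) ^ p ^ s})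
        (((X : F[X]) ^ n + C γ) ^ i)} ∧
    ((X : F[X]) ^ (n * p ^ (s - 1)) + C (γ ^ p ^ (s - 1))).support.card = 2 ∧
    sInf {w : ℕ | ∃ f : F[X], f ≠ 0 ∧ f.natDegree < n * p ^ s ∧
        Ideal.Quotient.mk (Ideal.span {((X : F[X]) ^ n + C γ) ^ p ^ s}) f ∈
          Ideal.span {Ideal.Quotient.mk (Ideal.span {((X : F[X]) ^ n + C γ) ^ p ^ s})
            (((X : F[X]) ^ n + C γ) ^ i)} ∧
        w = f.support.card} = 2 := by
  set q : F[X] := X ^ n + C γ with hq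
  haveI : Fact p.Prime := ⟨hp⟩
  haveI : ExpChar F[X] p := inferInstance
  have hfrob : q ^ p ^ (s - 1) =
      (X : F[X]) ^ (n * p ^ (s - 1)) + C (γ ^ p ^ (s - 1)) := by
    rw [hq, add_pow_char_pow, ← pow_mul, map_pow]
  have hqn0 : q ≠ 0 := hirr.ne_zero
  -- membership
  have hmem : Ideal.Quotient.mk (Ideal.span {q ^ p ^ s})
      ((X : F[X]) ^ (n * p ^ (s - 1)) + C (γ ^ p ^ (s - 1))) ∈
      Ideal.span {Ideal.Quotient.mk (Ideal.span {q ^ p ^ s}) (q ^ i)} := by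
    rw [Ideal.mem_span_singleton, ← hfrob]
    exact map_dvd _ (pow_dvd_pow q hi2)
  have hcard : ((X : F[X]) ^ (n * p ^ (s - 1)) + C (γ ^ p ^ (s - 1))).support.card = 2 := by
    have h1 : (X : F[X]) ^ (n * p ^ (s - 1)) + C (γ ^ p ^ (s - 1)) =
        C 1 * X ^ (n * p ^ (s - 1)) + C (γ ^ p ^ (s - 1)) * X ^ 0 := by simp
    have hnm : n * p ^ (s - 1) ≠ 0 := Nat.mul_ne_zero (by omega) (pow_ne_zero _ hp.pos.ne')
    rw [h1, support_binomial hnm (one_ne_zero) (pow_ne_zero _ hγ)]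
    simp [hnm]
  refine ⟨hmem, hcard, ?_⟩
  -- characterization: mk f ∈ span {mk (q^i)} → q^i ∣ f
  have hchar : ∀ f : F[X], Ideal.Quotient.mk (Ideal.span {q ^ p ^ s}) f ∈
      Ideal.span {Ideal.Quotient.mk (Ideal.span {q ^ p ^ s}) (q ^ i)} → q ^ i ∣ f := by
    intro f hf
    rw [Ideal.mem_span_singleton] at hf
    obtain ⟨z, hz⟩ := hf
    obtain ⟨g, rfl⟩ := Ideal.Quotient.mk_surjective z
    have : Ideal.Quotient.mk (Ideal.span {q ^ p ^ s}) (f - q ^ i * g) = 0 := by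
      rw [map_sub, map_mul, hz]; ring
    rw [Ideal.Quotient.eq_zero_iff_mem, Ideal.mem_span_singleton] at this
    have hips : i ≤ p ^ s := hi2.trans (Nat.pow_le_pow_right hp.one_lt.le (Nat.sub_le s 1))
    have h2 : q ^ i ∣ f - q ^ i * g := dvd_trans (pow_dvd_pow q hips) this
    have := dvd_add h2 (Dvd.intro g rfl)
    simpa using this
  have h2mem : 2 ∈ {w : ℕ | ∃ f : F[X], f ≠ 0 ∧ f.natDegree < n * p ^ s ∧
      Ideal.Quotient.mk (Ideal.span {q ^ p ^ s}) f ∈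
        Ideal.span {Ideal.Quotient.mk (Ideal.span {q ^ p ^ s}) (q ^ i)} ∧
      w = f.support.card} := by
    refine ⟨(X : F[X]) ^ (n * p ^ (s - 1)) + C (γ ^ p ^ (s - 1)), ?_, ?_, hmem, hcard.symm⟩
    · intro h0
      rw [h0] at hcard
      simp at hcard
    · rw [natDegree_X_pow_add_C]
      have hlt : p ^ (s - 1) < p ^ s := Nat.pow_lt_pow_right hp.one_lt (by omega)
      have hp1 : 1 ≤ p ^ (s-1) := Nat.one_le_pow _ _ hp.pos
      nlinarith
  refine le_antisymm (Nat.sInf_le h2mem) (le_csInf ⟨2, h2mem⟩ ?_)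
  rintro w ⟨f, hf0, hfdeg, hfmem, rfl⟩
  by_contra hlt
  push_neg at hlt
  interval_cases h : f.support.card
  · exact hf0 (Polynomial.card_support_eq_zero.mp h)
  · obtain ⟨k, c, hc, rfl⟩ := Polynomial.card_support_eq_one.mp h
    have hdvd : q ^ i ∣ C c * X ^ k := hchar _ hfmem
    have : q ∣ C c * X ^ k := dvd_trans (dvd_pow_self q (by omega)) hdvd
    exact aux_not_dvd hn hγ hirr hc this
end

section
/- Let p be a prime, s ≥ 1, n ≥ 1, F_q a finite field of characteristic p, γ ∈ F_q nonzero with x^n + γ irreducible over F_q, and let β, i be integers with 1 ≤ β ≤ p-2 and βp^{s-1} + 1 ≤ i ≤ (β+1)p^{s-1}. Then the minimum Hamming distance of the ideal C = ⟨(x^n + γ)^i⟩ in F_q[x]/⟨(x^n + γ)^{p^s}⟩ equals β + 2. -/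
/-!
Write `a = X ^ n + γ`, `M = p ^ (s - 1)`, `N = n * M` and `c = γ ^ M`, so that `a ^ M = X ^ N + c`
by Frobenius. The codeword `a ^ ((β + 1) * M) = (X ^ N + c) ^ (β + 1)` has weight `β + 2`, since
`β + 1 < p` makes all binomial coefficients of `(X + c) ^ (β + 1)` nonzero in `F`.

Conversely, a nonzero `f` of degree `< p * N` in the ideal is divisible by `(X ^ N + c) ^ β * a`.
Split `f = ∑_{r < N} X ^ r * f_r (X ^ N)` by exponents mod `N`: every `f_r` has degree `< p` and
equals `(X + c) ^ β * g_r`, where `g = ∑ X ^ r * g_r (X ^ N)` is divisible by `a`. A nonzero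
polynomial of degree `< p` divisible by `(X + c) ^ m` has at least `m + 1` terms (strip powers of
`X`, then differentiate, which lowers both the multiplicity and the weight). So two nonzero `g_r`
already give weight `2 * (β + 1)`. If only `g_{r₀}` is nonzero, then `a ∣ g_{r₀} (X ^ N)`
forces `g_{r₀} (-c) = 0`, because `g_{r₀} (X ^ N) ≡ g_{r₀} (-c)` modulo `X ^ N + c`; hence
`f_{r₀}` is divisible by `(X + c) ^ (β + 1)`.
-/

open Polynomial Finset

namespace Polynomial

section CommSemiring

variable {R : Type*} [CommSemiring R] {N r : ℕ}

theorem card_support_X_pow_mul_expand (hN : 0 < N) (r : ℕ) (u : R[X]) :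
    #(X ^ r * expand R N u).support = #u.support := by
  symm
  refine card_bij (fun t _ => N * t + r) (fun t ht => ?_) (fun t _ t' _ h => ?_) (fun k hk => ?_)
  · rwa [mem_support_iff, coeff_X_pow_mul, coeff_expand_mul' hN, ← mem_support_iff]
  · simpa [hN.ne'] using h
  · rw [mem_support_iff, coeff_X_pow_mul', coeff_expand hN] at hk
    split_ifs at hk with hrk hNk
    · obtain ⟨t, ht⟩ := hNk
      rw [ht, Nat.mul_div_cancel_left t hN] at hk
      exact ⟨t, mem_support_iff.2 hk, by omega⟩
    all_goals exact absurd rfl hk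

theorem card_support_expand_s16 (hN : 0 < N) (u : R[X]) : #(expand R N u).support = #u.support := by
  simpa using card_support_X_pow_mul_expand hN 0 u

theorem coeff_X_pow_mul_expand (hr : r < N) (u : R[X]) (m : ℕ) :
    (X ^ r * expand R N u).coeff m = if m % N = r then u.coeff (m / N) else 0 := by
  have hN : 0 < N := by omega
  rw [coeff_X_pow_mul', coeff_expand hN]
  have hm := Nat.div_add_mod m N
  by_cases h : m % N = r
  · rw [if_pos (by omega), if_pos h, if_pos ⟨m / N, by omega⟩,
      show m - r = N * (m / N) by omega, Nat.mul_div_cancel_left _ hN]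
  · rw [if_neg h]
    split_ifs with hrm hdvd
    · obtain ⟨k, hk⟩ := hdvd
      exact absurd (by rw [show m = N * k + r by omega, Nat.mul_add_mod, Nat.mod_eq_of_lt hr]) h
    all_goals rfl

theorem coeff_iterate_divX (g : R[X]) (r t : ℕ) : (divX^[r] g).coeff t = g.coeff (t + r) := by
  induction r generalizing t with
  | zero => rfl
  | succ r ih => rw [Function.iterate_succ_apply', coeff_divX, ih, add_right_comm, add_assoc]

/-- `∑ₜ g_{N t + r} Xᵗ`, the part of `g` at exponents `≡ r mod N`. -/
noncomputable def residuePart (N r : ℕ) (g : R[X]) : R[X] :=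
  contract N (divX^[r] g)

theorem coeff_residuePart (hN : 0 < N) (r : ℕ) (g : R[X]) (t : ℕ) :
    (residuePart N r g).coeff t = g.coeff (N * t + r) := by
  rw [residuePart, coeff_contract hN.ne', coeff_iterate_divX, mul_comm]

theorem sum_X_pow_mul_expand_residuePart (hN : 0 < N) (g : R[X]) :
    ∑ r ∈ range N, X ^ r * expand R N (residuePart N r g) = g := by
  ext m
  rw [finsetSum_coeff, sum_congr rfl fun r hr => coeff_X_pow_mul_expand (mem_range.1 hr) _ m,
    sum_ite_eq, if_pos (mem_range.2 (Nat.mod_lt m hN)), coeff_residuePart hN, Nat.div_add_mod]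

theorem residuePart_sum_X_pow_mul_expand (hr : r < N) (u : ℕ → R[X]) :
    residuePart N r (∑ r' ∈ range N, X ^ r' * expand R N (u r')) = u r := by
  have hN : 0 < N := by omega
  ext t
  have hmod : (N * t + r) % N = r := by rw [Nat.mul_add_mod, Nat.mod_eq_of_lt hr]
  have hdiv : (N * t + r) / N = t := by rw [Nat.mul_add_div hN, Nat.div_eq_of_lt hr, add_zero]
  rw [coeff_residuePart hN, finsetSum_coeff,
    sum_congr rfl fun r' hr' => coeff_X_pow_mul_expand (mem_range.1 hr') _ _]
  simp_rw [hmod, hdiv]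
  rw [sum_ite_eq, if_pos (mem_range.2 hr)]

theorem residuePart_expand_mul (hr : r < N) (h g : R[X]) :
    residuePart N r (expand R N h * g) = h * residuePart N r g := by
  conv_lhs => rw [← sum_X_pow_mul_expand_residuePart (by omega : 0 < N) g, mul_sum]
  simp_rw [mul_left_comm (expand R N h), ← map_mul]
  exact residuePart_sum_X_pow_mul_expand hr _

theorem card_support_eq_sum_residuePart (hN : 0 < N) (g : R[X]) :
    #g.support = ∑ r ∈ range N, #(residuePart N r g).support := by
  classical
  rw [card_eq_sum_card_fiberwise fun k _ => mem_range.2 (Nat.mod_lt k hN)]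
  refine sum_congr rfl fun r hr => ?_
  rw [← card_support_X_pow_mul_expand hN r]
  congr 1
  ext m
  rw [mem_filter, mem_support_iff, mem_support_iff, coeff_X_pow_mul_expand (mem_range.1 hr)]
  split_ifs with h
  · rw [coeff_residuePart hN, ← h, Nat.div_add_mod]
    simp
  · simp [h]

theorem natDegree_residuePart_lt {D : ℕ} (hN : 0 < N) {g : R[X]} (hg : g.natDegree < D * N)
    (r : ℕ) : (residuePart N r g).natDegree < D := by
  have hle : (residuePart N r g).natDegree ≤ D - 1 := by
    refine natDegree_le_iff_coeff_eq_zero.2 fun t ht => ?_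
    rw [coeff_residuePart hN]
    refine coeff_eq_zero_of_natDegree_lt (lt_of_lt_of_le hg ?_)
    calc D * N ≤ N * t := by rw [mul_comm]; exact Nat.mul_le_mul_left N (by omega)
      _ ≤ N * t + r := Nat.le_add_right _ _
  have hD : 0 < D := Nat.pos_of_ne_zero (by rintro rfl; simp at hg)
  omega

theorem card_support_derivative_lt {h : R[X]} (h0 : h.coeff 0 ≠ 0) :
    #(derivative h).support < #h.support := by
  classical
  calc #(derivative h).support = #((derivative h).support.image (· + 1)) :=
        (card_image_of_injective _ (add_left_injective 1)).symm
    _ ≤ #(h.support.erase 0) := card_le_card fun k hk => by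
        obtain ⟨t, ht, rfl⟩ := mem_image.1 hk
        exact mem_erase.2 ⟨t.succ_ne_zero, of_mem_support_derivative ht⟩
    _ < #h.support := card_erase_lt_of_mem (mem_support_iff.2 h0)

end CommSemiring

theorem X_pow_add_C_dvd_expand_sub_C_eval {R : Type*} [CommRing R] (N : ℕ) (c : R) (u : R[X]) :
    X ^ N + C c ∣ expand R N u - C (u.eval (-c)) := by
  simpa using _root_.map_dvd (expand R N) (X_sub_C_dvd_sub_C_eval (a := -c) (p := u))

section Field

variable {F : Type*} [Field F] {p : ℕ} [CharP F p]

theorem derivative_ne_zero_of_natDegree_lt {h : F[X]} (h0 : 0 < h.natDegree)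
    (hp : h.natDegree < p) : derivative h ≠ 0 := by
  obtain ⟨d, hd⟩ : ∃ d, h.natDegree = d + 1 := ⟨h.natDegree - 1, by omega⟩
  intro hder
  have hcoeff := congrArg (coeff · d) hder
  simp only [coeff_derivative, coeff_zero, ← hd] at hcoeff
  refine mul_ne_zero (leadingCoeff_ne_zero.2 (ne_zero_of_natDegree_gt h0)) ?_ hcoeff
  rw [show (d : F) + 1 = ((d + 1 : ℕ) : F) by push_cast; rfl, ← hd, Ne,
    CharP.cast_eq_zero_iff F p]
  exact fun hdvd => absurd (Nat.le_of_dvd h0 hdvd) (by omega)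

theorem le_card_support_of_X_add_C_pow_dvd {c : F} (hc : c ≠ 0) {m : ℕ} {h : F[X]}
    (h0 : h ≠ 0) (hdeg : h.natDegree < p) (hdvd : (X + C c) ^ m ∣ h) :
    m + 1 ≤ #h.support := by
  induction m generalizing h with
  | zero => exact card_pos.2 (support_nonempty.2 h0)
  | succ m ih =>
    obtain ⟨q, hq, hXq⟩ := exists_eq_pow_rootMultiplicity_mul_and_not_dvd h h0 0
    generalize rootMultiplicity 0 h = k at hq
    simp only [map_zero, sub_zero] at hq hXq
    subst hq
    have hq0 : q ≠ 0 := right_ne_zero_of_mul h0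
    have hcop : IsCoprime ((X + C c) ^ (m + 1)) (X ^ k) := by
      refine IsCoprime.pow (irreducible_X.coprime_iff_not_dvd.2 ?_).symm
      simpa [X_dvd_iff] using hc
    have hdvdq : (X + C c) ^ (m + 1) ∣ q := hcop.dvd_of_dvd_mul_left hdvd
    have hqdeg : q.natDegree < p :=
      lt_of_le_of_lt (natDegree_le_of_dvd (dvd_mul_left q _) h0) hdeg
    have hqpos : 0 < q.natDegree := by
      have := natDegree_le_of_dvd ((dvd_pow_self _ m.succ_ne_zero).trans hdvdq) hq0
      rwa [natDegree_X_add_C] at this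
    have hwt := ih (derivative_ne_zero_of_natDegree_lt hqpos hqdeg)
      (lt_of_le_of_lt (natDegree_derivative_le q) (by omega))
      (by simpa using pow_sub_one_dvd_derivative_of_pow_dvd hdvdq)
    have hdrop := card_support_derivative_lt (mt X_dvd_iff.2 hXq)
    have hstrip : #(X ^ k * q).support = #q.support := by
      simpa using card_support_X_pow_mul_expand one_pos k q
    omega

theorem card_support_X_add_C_pow (hp : p.Prime) {c : F} (hc : c ≠ 0) {m : ℕ} (hm : m < p) :
    #((X + C c) ^ m).support = m + 1 := by
  suffices ((X + C c) ^ m).support = range (m + 1) by rw [this, card_range]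
  ext t
  rw [mem_support_iff, coeff_X_add_C_pow, mem_range]
  constructor
  · intro h
    by_contra ht
    exact h (by rw [Nat.choose_eq_zero_of_lt (by omega), Nat.cast_zero, mul_zero])
  · intro ht
    refine mul_ne_zero (pow_ne_zero _ hc) ?_
    rw [Ne, CharP.cast_eq_zero_iff F p]
    exact hp.coprime_iff_not_dvd.1 (hp.coprime_choose_of_lt hm (by omega))

theorem X_add_C_dvd_of_dvd_X_pow_mul_expand {c : F} (hc : c ≠ 0) {N r : ℕ} (hN : 0 < N)
    {a u : F[X]} (ha : a ∣ X ^ N + C c) (ha0 : 0 < a.natDegree)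
    (h : a ∣ X ^ r * expand F N u) : X + C c ∣ u := by
  have hcop : IsCoprime a (X ^ r) := by
    refine (IsCoprime.pow_left (IsCoprime.of_isCoprime_of_dvd_right ?_ ha)).symm
    rw [irreducible_X.coprime_iff_not_dvd, X_dvd_iff]
    simpa [hN.ne, hN.ne'] using hc
  have hconst : a ∣ C (u.eval (-c)) := by
    have := dvd_sub (hcop.dvd_of_dvd_mul_left h)
      (ha.trans (X_pow_add_C_dvd_expand_sub_C_eval N c u))
    rwa [sub_sub_cancel] at this
  have hroot : u.IsRoot (-c) := by
    by_contra hne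
    have := natDegree_le_of_dvd hconst (C_ne_zero.2 hne)
    rw [natDegree_C] at this
    omega
  simpa using dvd_iff_isRoot.2 hroot

theorem add_le_card_support_residuePart_expand_mul {c : F} (hc : c ≠ 0) {N r β m : ℕ}
    (hN : 0 < N) (hr : r < N) {g : F[X]}
    (hdeg : (expand F N ((X + C c) ^ β) * g).natDegree < p * N) (hg : residuePart N r g ≠ 0)
    (hdvd : (X + C c) ^ m ∣ residuePart N r g) :
    β + m + 1 ≤ #(residuePart N r (expand F N ((X + C c) ^ β) * g)).support := by
  have hpart := natDegree_residuePart_lt hN hdeg r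
  rw [residuePart_expand_mul hr] at hpart ⊢
  exact le_card_support_of_X_add_C_pow_dvd hc
    (mul_ne_zero (pow_ne_zero _ (X_add_C_ne_zero c)) hg) hpart
    (pow_add (X + C c) β m ▸ mul_dvd_mul_left _ hdvd)

theorem add_two_le_card_support_of_dvd {c : F} (hc : c ≠ 0) {N β : ℕ} (hN : 0 < N)
    {a f : F[X]} (ha : a ∣ X ^ N + C c) (ha0 : 0 < a.natDegree) (hf0 : f ≠ 0)
    (hdeg : f.natDegree < p * N) (hdvd : expand F N ((X + C c) ^ β) * a ∣ f) :
    β + 2 ≤ #f.support := by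
  obtain ⟨g₀, rfl⟩ := hdvd
  rw [mul_assoc] at hf0 hdeg ⊢
  set g := a * g₀
  set f := expand F N ((X + C c) ^ β) * g
  have hg0 : g ≠ 0 := right_ne_zero_of_mul hf0
  have hwt {r : ℕ} (m : ℕ) (hr : r < N) (hg : residuePart N r g ≠ 0)
      (hdvd : (X + C c) ^ m ∣ residuePart N r g) : β + m + 1 ≤ #(residuePart N r f).support :=
    add_le_card_support_residuePart_expand_mul hc hN hr hdeg hg hdvd
  rw [card_support_eq_sum_residuePart hN]
  obtain ⟨r₀, hr₀, hg₀⟩ : ∃ r < N, residuePart N r g ≠ 0 := by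
    by_contra! hzero
    refine hg0 ?_
    rw [← sum_X_pow_mul_expand_residuePart hN g]
    exact sum_eq_zero fun r hr => by rw [hzero r (mem_range.1 hr), map_zero, mul_zero]
  by_cases htwo : ∃ r₁ < N, r₁ ≠ r₀ ∧ residuePart N r₁ g ≠ 0
  · obtain ⟨r₁, hr₁, hne, hg₁⟩ := htwo
    calc β + 2 ≤ (β + 0 + 1) + (β + 0 + 1) := by omega
      _ ≤ ∑ r ∈ {r₀, r₁}, #(residuePart N r f).support := by
        rw [sum_pair hne.symm]
        exact add_le_add (hwt 0 hr₀ hg₀ (by simp)) (hwt 0 hr₁ hg₁ (by simp))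
      _ ≤ _ := sum_le_sum_of_subset (by simp [insert_subset_iff, hr₀, hr₁])
  · push Not at htwo
    have hg : X ^ r₀ * expand F N (residuePart N r₀ g) = g := by
      conv_rhs => rw [← sum_X_pow_mul_expand_residuePart hN g]
      rw [sum_eq_single_of_mem r₀ (mem_range.2 hr₀) fun r hr hne => by
        rw [htwo r (mem_range.1 hr) hne, map_zero, mul_zero]]
    have hdvd := X_add_C_dvd_of_dvd_X_pow_mul_expand hc hN ha ha0
      (by rw [hg]; exact dvd_mul_right a g₀)
    calc β + 2 = β + 1 + 1 := rfl
      _ ≤ #(residuePart N r₀ f).support := hwt 1 hr₀ hg₀ (by simpa using hdvd)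
      _ ≤ _ := single_le_sum (f := fun r => #(residuePart N r f).support)
        (fun _ _ => Nat.zero_le _) (mem_range.2 hr₀)

end Field

end Polynomial

theorem Ideal.Quotient.mk_mem_span_singleton_mk_iff {R : Type*} [CommRing R] {b g f : R}
    (hbg : b ∣ g) :
    Ideal.Quotient.mk (Ideal.span {g}) f ∈ Ideal.span {Ideal.Quotient.mk (Ideal.span {g}) b} ↔
      b ∣ f := by
  rw [← Set.image_singleton, ← Ideal.map_span, Ideal.mem_quotient_iff_mem,
    Ideal.mem_span_singleton]
  rwa [Ideal.span_singleton_le_span_singleton]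

theorem stmt_16_general (p s n : ℕ) (hp : p.Prime) (hs : 1 ≤ s) (hn : 1 ≤ n)
    (F : Type*) [Field F] [CharP F p]
    (γ : F) (hγ : γ ≠ 0)
    (β i : ℕ) (hβ2 : β ≤ p - 2)
    (hi1 : β * p ^ (s - 1) + 1 ≤ i) (hi2 : i ≤ (β + 1) * p ^ (s - 1)) :
    sInf {w : ℕ | ∃ f : F[X], f ≠ 0 ∧ f.natDegree < n * p ^ s ∧
        Ideal.Quotient.mk (Ideal.span {((X : F[X]) ^ n + C γ) ^ p ^ s}) f ∈
          Ideal.span {Ideal.Quotient.mk (Ideal.span {((X : F[X]) ^ n + C γ) ^ p ^ s})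
            (((X : F[X]) ^ n + C γ) ^ i)} ∧
        w = f.support.card} = β + 2 := by
  have : Fact p.Prime := ⟨hp⟩
  set M := p ^ (s - 1)
  set a : F[X] := X ^ n + C γ
  have hM : 0 < M := pow_pos hp.pos _
  have hpM : p * M = p ^ s := by rw [← pow_succ']; congr 1; omega
  have hβp : β + 1 < p := by have := hp.two_le; omega
  have hfrob : a ^ M = X ^ (n * M) + C (γ ^ M) := by rw [add_pow_expChar_pow, ← pow_mul, C_pow]
  have hexpand (k : ℕ) : expand F (n * M) ((X + C (γ ^ M)) ^ k) = a ^ (k * M) := by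
    rw [map_pow, map_add, expand_X, expand_C, ← hfrob, ← pow_mul, mul_comm]
  have hdeg : n * p ^ s = p * (n * M) := by rw [← hpM]; ring
  have hip : i ≤ p ^ s := hi2.trans (hpM ▸ Nat.mul_le_mul_right M hβp.le)
  simp_rw [Ideal.Quotient.mk_mem_span_singleton_mk_iff (pow_dvd_pow a hip)]
  refine IsLeast.csInf_eq ⟨⟨a ^ ((β + 1) * M), pow_ne_zero _ (X_pow_add_C_ne_zero hn γ), ?_,
    pow_dvd_pow a hi2, ?_⟩, ?_⟩
  · rw [natDegree_pow, natDegree_X_pow_add_C, hdeg]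
    calc (β + 1) * M * n < p * (M * n) := by
          rw [mul_assoc]; exact Nat.mul_lt_mul_of_pos_right hβp (by positivity)
      _ = p * (n * M) := by ring
  · rw [← hexpand, card_support_expand_s16 (by positivity),
      card_support_X_add_C_pow hp (pow_ne_zero _ hγ) hβp]
  · rintro w ⟨f, hf0, hfdeg, hdvd, rfl⟩
    refine add_two_le_card_support_of_dvd (pow_ne_zero _ hγ) (by positivity)
      (hfrob ▸ dvd_pow_self a hM.ne') (by rw [natDegree_X_pow_add_C]; omega) hf0
      (hdeg ▸ hfdeg) ?_
    rw [hexpand, ← pow_succ]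
    exact (pow_dvd_pow a hi1).trans hdvd

theorem stmt_16 (p s n : ℕ) (hp : p.Prime) (hs : 1 ≤ s) (hn : 1 ≤ n)
    (F : Type*) [Field F] [Fintype F] [CharP F p]
    (γ : F) (hγ : γ ≠ 0) (hirr : Irreducible ((X : F[X]) ^ n + C γ))
    (β i : ℕ) (hβ1 : 1 ≤ β) (hβ2 : β ≤ p - 2)
    (hi1 : β * p ^ (s - 1) + 1 ≤ i) (hi2 : i ≤ (β + 1) * p ^ (s - 1)) :
    sInf {w : ℕ | ∃ f : F[X], f ≠ 0 ∧ f.natDegree < n * p ^ s ∧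
        Ideal.Quotient.mk (Ideal.span {((X : F[X]) ^ n + C γ) ^ p ^ s}) f ∈
          Ideal.span {Ideal.Quotient.mk (Ideal.span {((X : F[X]) ^ n + C γ) ^ p ^ s})
            (((X : F[X]) ^ n + C γ) ^ i)} ∧
        w = f.support.card} = β + 2 :=
  stmt_16_general p s n hp hs hn F γ hγ β i hβ2 hi1 hi2
end
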